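/- Let t ≥ 2 and let G be a graph with E(G) = ⋂_{i=1}^{t} E(H_i), where H₁,...,H_{t-1} are interval supergraphs of G and H_t is a perfect supergraph of G. Then β(G) ≤ 2^{t-1}·α(G)·∏_{i=1}^{t-1}(log₂(α(H_i)) + 1). -/

import Mathlib

/-!
Cut the interval model of `H₁` at a point `x`. The intervals containing `x` form a clique of `H₁`,
and `x` can be chosen so that the intervals lying entirely to its left, and those lying entirely to
its right, each have independence number at most `α(H₁)/2` in `H₁`. There are no edges between the
two sides, so their independence numbers in `G` add up to at most `α(G)`; recursing on both sides
costs a factor `2 (log₂ α(H₁) + 1)` over the bound available on cliques of `H₁`. Doing this for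
`H₁, …, H_{t-1}` in turn reduces to vertex sets that are cliques in every `H_i`; there `G` and `H_t`
induce the same graph, and `H_t` is perfect, so `β = α`.
-/

open SimpleGraph

/-- `s` is an independent set in `G`: pairwise nonadjacent vertices. -/
def SimpleGraph.IsIndepFinset {V : Type*} (G : SimpleGraph V) (s : Finset V) : Prop :=
  (s : Set V).Pairwise fun a b => ¬ G.Adj a b

/-- The independence number `α(G)`: the largest size of an independent set. -/
noncomputable def indepNum {V : Type*} (G : SimpleGraph V) : ℕ :=
  sSup {n | ∃ s : Finset V, G.IsIndepFinset s ∧ s.card = n}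

/-- `C` is a clique cover of `G`: a family of cliques covering every vertex. -/
def SimpleGraph.IsCliqueCover {V : Type*} (G : SimpleGraph V) (C : Finset (Finset V)) : Prop :=
  (∀ c ∈ C, G.IsClique (c : Set V)) ∧ ∀ v : V, ∃ c ∈ C, v ∈ c

/-- The clique cover number `β(G)`: minimum number of cliques covering `V(G)`. -/
noncomputable def cliqueCoverNum {V : Type*} (G : SimpleGraph V) : ℕ :=
  sInf {n | ∃ C : Finset (Finset V), G.IsCliqueCover C ∧ C.card = n}

/-- `G` is an interval graph: the intersection graph of closed real intervals. -/
def IsIntervalGraph {V : Type*} (G : SimpleGraph V) : Prop :=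
  ∃ a b : V → ℝ, ∀ u v : V, G.Adj u v ↔
    u ≠ v ∧ (Set.Icc (a u) (b u) ∩ Set.Icc (a v) (b v)).Nonempty

/-- `G` is perfect (stated via clique covers): `β = α` on every induced subgraph. -/
def IsPerfectGraph {V : Type*} (G : SimpleGraph V) : Prop :=
  ∀ W : Finset V, cliqueCoverNum (G.induce (W : Set V)) = _root_.indepNum (G.induce (W : Set V))

/-- `φ(G,H)`: the maximum of `β(G[W])/α(G[W])` over subsets `W` inducing cliques in `H`. -/
noncomputable def phi {V : Type*} (G H : SimpleGraph V) : ℝ :=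
  sSup {x : ℝ | ∃ W : Finset V, H.IsClique (W : Set V) ∧
    x = (cliqueCoverNum (G.induce (W : Set V)) : ℝ) / (_root_.indepNum (G.induce (W : Set V)) : ℝ)}

section

variable {V : Type*}

-- `α(G[s])` and `β(G[s])`, kept on the ambient vertex type so that the recursion needs no subtypes.
noncomputable def indepNumOn (G : SimpleGraph V) (s : Finset V) : ℕ :=
  sSup {n | ∃ t ⊆ s, G.IsIndepFinset t ∧ t.card = n}

noncomputable def cliqueCoverNumOn (G : SimpleGraph V) (s : Finset V) : ℕ :=
  sInf {n | ∃ C : Finset (Finset V), (∀ c ∈ C, G.IsClique (c : Set V)) ∧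
    (∀ v ∈ s, ∃ c ∈ C, v ∈ c) ∧ C.card = n}

section IndepNumOn

variable (G : SimpleGraph V)

lemma bddAbove_indepNumOn (s : Finset V) :
    BddAbove {n | ∃ t ⊆ s, G.IsIndepFinset t ∧ t.card = n} :=
  ⟨s.card, by rintro n ⟨t, hts, -, rfl⟩; exact Finset.card_le_card hts⟩

lemma card_le_indepNumOn {s t : Finset V} (hts : t ⊆ s) (ht : G.IsIndepFinset t) :
    t.card ≤ indepNumOn G s :=
  le_csSup (bddAbove_indepNumOn G s) ⟨t, hts, ht, rfl⟩

lemma exists_isIndepFinset_card_eq_indepNumOn (s : Finset V) :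
    ∃ t ⊆ s, G.IsIndepFinset t ∧ t.card = indepNumOn G s :=
  Nat.sSup_mem (s := {n | ∃ t ⊆ s, G.IsIndepFinset t ∧ t.card = n})
    ⟨0, ∅, Finset.empty_subset s, by simp [IsIndepFinset], rfl⟩ (bddAbove_indepNumOn G s)

lemma indepNumOn_mono {s t : Finset V} (h : s ⊆ t) : indepNumOn G s ≤ indepNumOn G t := by
  obtain ⟨u, hus, hu, hcard⟩ := exists_isIndepFinset_card_eq_indepNumOn G s
  exact hcard ▸ card_le_indepNumOn G (hus.trans h) hu

lemma indepNumOn_pos {s : Finset V} (hs : s.Nonempty) : 0 < indepNumOn G s := by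
  obtain ⟨v, hv⟩ := hs
  simpa [Nat.one_le_iff_ne_zero, Nat.pos_iff_ne_zero] using
    card_le_indepNumOn G (Finset.singleton_subset_iff.2 hv) (by simp [IsIndepFinset])

lemma indepNumOn_add_le [DecidableEq V] {s t : Finset V} (hst : Disjoint s t)
    (hadj : ∀ u ∈ s, ∀ v ∈ t, ¬ G.Adj u v) :
    indepNumOn G s + indepNumOn G t ≤ indepNumOn G (s ∪ t) := by
  obtain ⟨s', hs', hs'i, hs'c⟩ := exists_isIndepFinset_card_eq_indepNumOn G s
  obtain ⟨t', ht', ht'i, ht'c⟩ := exists_isIndepFinset_card_eq_indepNumOn G t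
  have hind : G.IsIndepFinset (s' ∪ t') := by
    rw [IsIndepFinset, Finset.coe_union, Set.pairwise_union]
    exact ⟨hs'i, ht'i, fun u hu v hv _ =>
      ⟨hadj u (hs' hu) v (ht' hv), fun h => hadj u (hs' hu) v (ht' hv) h.symm⟩⟩
  rw [← hs'c, ← ht'c, ← Finset.card_union_of_disjoint (hst.mono hs' ht')]
  exact card_le_indepNumOn G (Finset.union_subset_union hs' ht') hind

lemma indepNumOn_le_indepNum [Fintype V] (s : Finset V) : indepNumOn G s ≤ _root_.indepNum G := by
  obtain ⟨t, -, ht, hcard⟩ := exists_isIndepFinset_card_eq_indepNumOn G s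
  exact le_csSup ⟨Fintype.card V, by rintro n ⟨u, -, rfl⟩; exact Finset.card_le_univ u⟩
    ⟨t, ht, hcard⟩

lemma indepNum_le_indepNumOn {V' : Type*} {G' : SimpleGraph V'} (φ : G' ↪g G) {s : Finset V}
    (hs : Set.range φ ⊆ s) : _root_.indepNum G' ≤ indepNumOn G s := by
  refine csSup_le ⟨0, ∅, by simp [IsIndepFinset], rfl⟩ ?_
  rintro n ⟨t, ht, rfl⟩
  rw [← Finset.card_map φ.toEmbedding]
  refine card_le_indepNumOn G (fun v hv => ?_) ?_
  · obtain ⟨w, -, rfl⟩ := Finset.mem_map.1 hv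
    exact hs ⟨w, rfl⟩
  · rw [IsIndepFinset, Finset.coe_map, φ.toEmbedding.injective.injOn.pairwise_image]
    exact fun u hu w hw huw => by simpa [Function.onFun] using ht hu hw huw

lemma indepNumOn_empty : indepNumOn G ∅ = 0 := by
  obtain ⟨t, ht, -, hcard⟩ := exists_isIndepFinset_card_eq_indepNumOn G ∅
  rw [← hcard, Finset.subset_empty.1 ht, Finset.card_empty]

end IndepNumOn

section CliqueCoverNumOn

variable (G : SimpleGraph V)

lemma cliqueCoverNumOn_le_card {s : Finset V} {C : Finset (Finset V)}
    (hC : ∀ c ∈ C, G.IsClique (c : Set V)) (hs : ∀ v ∈ s, ∃ c ∈ C, v ∈ c) :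
    cliqueCoverNumOn G s ≤ C.card :=
  Nat.sInf_le ⟨C, hC, hs, rfl⟩

lemma exists_cliqueCover_card_eq_cliqueCoverNumOn (s : Finset V) :
    ∃ C : Finset (Finset V), (∀ c ∈ C, G.IsClique (c : Set V)) ∧
      (∀ v ∈ s, ∃ c ∈ C, v ∈ c) ∧ C.card = cliqueCoverNumOn G s := by
  classical
  refine Nat.sInf_mem (s := {n | ∃ C : Finset (Finset V), (∀ c ∈ C, G.IsClique (c : Set V)) ∧
    (∀ v ∈ s, ∃ c ∈ C, v ∈ c) ∧ C.card = n}) ⟨_, s.image ({·}), ?_,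
      fun v hv => ⟨{v}, Finset.mem_image_of_mem _ hv, by simp⟩, rfl⟩
  simp

lemma cliqueCoverNumOn_empty : cliqueCoverNumOn G ∅ = 0 :=
  Nat.le_zero.1 (cliqueCoverNumOn_le_card G (C := ∅) (by simp) (by simp))

lemma cliqueCoverNumOn_le_add [DecidableEq V] {s t u : Finset V} (h : s ⊆ t ∪ u) :
    cliqueCoverNumOn G s ≤ cliqueCoverNumOn G t + cliqueCoverNumOn G u := by
  obtain ⟨C, hC, htC, hCc⟩ := exists_cliqueCover_card_eq_cliqueCoverNumOn G t
  obtain ⟨D, hD, huD, hDc⟩ := exists_cliqueCover_card_eq_cliqueCoverNumOn G u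
  rw [← hCc, ← hDc]
  refine (cliqueCoverNumOn_le_card G (C := C ∪ D) ?_ ?_).trans (Finset.card_union_le C D)
  · simpa [or_imp, forall_and] using ⟨hC, hD⟩
  · intro v hv
    rcases Finset.mem_union.1 (h hv) with hv | hv
    · obtain ⟨c, hc, hvc⟩ := htC v hv
      exact ⟨c, Finset.mem_union_left D hc, hvc⟩
    · obtain ⟨c, hc, hvc⟩ := huD v hv
      exact ⟨c, Finset.mem_union_right C hc, hvc⟩

lemma cliqueCoverNum_le_cliqueCoverNumOn_univ [Fintype V] :
    cliqueCoverNum G ≤ cliqueCoverNumOn G Finset.univ := by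
  obtain ⟨C, hC, hcov, hcard⟩ := exists_cliqueCover_card_eq_cliqueCoverNumOn G Finset.univ
  exact Nat.sInf_le ⟨C, ⟨hC, fun v => hcov v (Finset.mem_univ v)⟩, hcard⟩

lemma cliqueCoverNumOn_le_cliqueCoverNum {V' : Type*} [Finite V'] {G' : SimpleGraph V'}
    (φ : G' ↪g G) {s : Finset V} (hs : ↑s ⊆ Set.range φ) :
    cliqueCoverNumOn G s ≤ cliqueCoverNum G' := by
  classical
  have : Fintype V' := Fintype.ofFinite V'
  obtain ⟨C, ⟨hC, hcov⟩, hcard⟩ := Nat.sInf_mem (s := {n | ∃ C, G'.IsCliqueCover C ∧ C.card = n})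
    ⟨_, Finset.univ.image ({·}), ⟨by simp, fun v => ⟨{v}, by simp⟩⟩, rfl⟩
  refine (cliqueCoverNumOn_le_card G (C := C.image (·.map φ.toEmbedding)) ?_ ?_).trans
    (Finset.card_image_le.trans hcard.le)
  · simp only [Finset.mem_image, forall_exists_index, and_imp, forall_apply_eq_imp_iff₂]
    intro c hc
    rw [Finset.coe_map, isClique_iff, φ.toEmbedding.injective.injOn.pairwise_image]
    exact fun u hu w hw huw => by simpa [Function.onFun] using hC c hc hu hw huw
  · intro v hv
    obtain ⟨w, rfl⟩ := hs hv
    obtain ⟨c, hc, hwc⟩ := hcov w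
    exact ⟨c.map φ.toEmbedding, Finset.mem_image_of_mem _ hc, Finset.mem_map_of_mem _ hwc⟩

end CliqueCoverNumOn

lemma induce_inf_eq_of_isClique {G H : SimpleGraph V} {s : Set V} (hs : G.IsClique s) :
    (G ⊓ H).induce s = H.induce s := by
  ext u v
  simp only [comap_adj, Function.Embedding.subtype_apply, inf_adj, and_iff_right_iff_imp]
  exact fun h => hs u.2 v.2 (H.ne_of_adj h)

lemma isClique_iInf {ι : Sort*} {H : ι → SimpleGraph V} {s : Set V}
    (hs : ∀ i, (H i).IsClique s) : (⨅ i, H i).IsClique s :=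
  fun _ hu _ hv huv => iInf_adj.2 ⟨fun i => hs i hu hv huv, huv⟩

lemma IsPerfectGraph.cliqueCoverNumOn_le_indepNumOn {G K : SimpleGraph V} (hK : IsPerfectGraph K)
    {W : Finset V} (hW : G.induce (W : Set V) = K.induce (W : Set V)) :
    cliqueCoverNumOn G W ≤ indepNumOn G W :=
  calc cliqueCoverNumOn G W
      ≤ cliqueCoverNum (G.induce (W : Set V)) :=
        cliqueCoverNumOn_le_cliqueCoverNum G (Embedding.induce _) Subtype.range_coe.superset
    _ = _root_.indepNum (G.induce (W : Set V)) := by rw [hW, hK W]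
    _ ≤ indepNumOn G W := indepNum_le_indepNumOn G (Embedding.induce _) Subtype.range_coe.subset

/-- A representation of `H` by nonempty closed intervals `[left v, right v]`. -/
structure IntervalModel (H : SimpleGraph V) where
  left : V → ℝ
  right : V → ℝ
  left_le_right : ∀ v, left v ≤ right v
  adj_iff : ∀ u v, H.Adj u v ↔ u ≠ v ∧ left u ≤ right v ∧ left v ≤ right u

lemma IsIntervalGraph.nonempty_intervalModel [Finite V] {H : SimpleGraph V}
    (hH : IsIntervalGraph H) : Nonempty (IntervalModel H) := by
  obtain ⟨a, b, hadj⟩ := hH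
  obtain ⟨n, ⟨e⟩⟩ := Finite.exists_equiv_fin V
  obtain ⟨N, hN⟩ := (Set.finite_range b).bddAbove
  -- Vertices with empty intervals are isolated: move them to distinct points right of everything.
  let p : V → ℝ := fun v => N + 1 + ((e v : ℕ) : ℝ)
  have hbp : ∀ u v, b u < p v := fun u v => by
    have := hN ⟨u, rfl⟩
    have : (0 : ℝ) ≤ ((e v : ℕ) : ℝ) := Nat.cast_nonneg _
    linarith
  have hp : ∀ u v, p u ≤ p v → p v ≤ p u → u = v := fun u v h₁ h₂ =>
    e.injective (Fin.ext (Nat.cast_injective (R := ℝ) (by linarith)))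
  refine ⟨⟨fun v => if a v ≤ b v then a v else p v, fun v => if a v ≤ b v then b v else p v,
    fun v => by split_ifs <;> simp_all, fun u v => ?_⟩⟩
  rw [hadj, Set.Icc_inter_Icc, Set.nonempty_Icc, sup_le_iff, le_inf_iff, le_inf_iff]
  have := hbp u v
  have := hbp v u
  split_ifs with hu hv hv
  · tauto
  all_goals constructor <;> rintro ⟨huv, h₁, h₂⟩
  all_goals first
    | exact absurd h₁.1 hu | exact absurd h₂.2 hv | exact absurd (hp u v h₁ h₂) huv | linarith

namespace IntervalModel

variable {H : SimpleGraph V} (I : IntervalModel H)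

lemma not_adj_of_right_lt_left {u v : V} (h : I.right u < I.left v) : ¬ H.Adj u v :=
  fun huv => absurd ((I.adj_iff u v).1 huv).2.2 (not_le.2 h)

lemma isClique_filter_mem (s : Finset V) (x : ℝ) :
    H.IsClique (s.filter (fun v => I.left v ≤ x ∧ x ≤ I.right v) : Set V) := by
  intro u hu v hv huv
  rw [Finset.mem_coe, Finset.mem_filter] at hu hv
  exact (I.adj_iff u v).2 ⟨huv, hu.2.1.trans hv.2.2, hv.2.1.trans hu.2.2⟩

lemma exists_halving_point (s : Finset V) :
    ∃ x : ℝ, 2 * indepNumOn H (s.filter (I.right · < x)) ≤ indepNumOn H s ∧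
      2 * indepNumOn H (s.filter (x < I.left ·)) ≤ indepNumOn H s := by
  classical
  rcases s.eq_empty_or_nonempty with rfl | hs
  · exact ⟨0, by simp [indepNumOn_empty]⟩
  set h := indepNumOn H s
  set D : ℝ → Finset V := fun x => s.filter (I.right · ≤ x)
  -- `x` is the leftmost right endpoint such that the intervals ending by `x` have `α > h / 2`.
  set T := (s.image I.right).filter (fun x => h < 2 * indepNumOn H (D x))
  have hT : T.Nonempty := by
    obtain ⟨y, hy, hmax⟩ := s.exists_max_image I.right hs
    refine ⟨I.right y, Finset.mem_filter.2 ⟨Finset.mem_image_of_mem _ hy, ?_⟩⟩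
    rw [show D (I.right y) = s from Finset.filter_true_of_mem hmax]
    have := indepNumOn_pos H hs
    omega
  obtain ⟨x, hxT, hmin⟩ := T.exists_min_image id hT
  refine ⟨x, ?_, ?_⟩
  · by_contra! hL
    obtain ⟨y, hyL, hmax⟩ := (s.filter (I.right · < x)).exists_max_image I.right
      (Finset.nonempty_iff_ne_empty.2 fun h0 => by simp [h0, indepNumOn_empty] at hL)
    have hyT : I.right y ∈ T := by
      refine Finset.mem_filter.2 ⟨Finset.mem_image_of_mem _ (Finset.filter_subset _ _ hyL), ?_⟩
      refine hL.trans_le (Nat.mul_le_mul_left 2 (indepNumOn_mono H fun v hv => ?_))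
      exact Finset.mem_filter.2 ⟨Finset.filter_subset _ _ hv, hmax v hv⟩
    exact absurd (hmin _ hyT) (not_le.2 (Finset.mem_filter.1 hyL).2)
  · have hdisj := indepNumOn_add_le H (s := D x) (t := s.filter (x < I.left ·))
      (Finset.disjoint_filter.2 fun v _ hDv hRv =>
        absurd (I.left_le_right v) (not_le.2 (hDv.trans_lt hRv)))
      (fun u hu v hv => I.not_adj_of_right_lt_left
        (((Finset.mem_filter.1 hu).2).trans_lt (Finset.mem_filter.1 hv).2))
    have hsub : indepNumOn H (D x ∪ s.filter (x < I.left ·)) ≤ h := indepNumOn_mono H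
      (Finset.union_subset (Finset.filter_subset (I.right · ≤ x) s)
        (Finset.filter_subset (x < I.left ·) s))
    have hxD := (Finset.mem_filter.1 hxT).2
    omega

end IntervalModel

theorem IntervalModel.cliqueCoverNumOn_le_mul_log {G H : SimpleGraph V} (I : IntervalModel H)
    (hGH : G ≤ H) (c : ℕ) (s : Finset V)
    (hc : ∀ W ⊆ s, H.IsClique (W : Set V) → cliqueCoverNumOn G W ≤ c * indepNumOn G W) :
    cliqueCoverNumOn G s ≤ c * (2 * (Nat.log 2 (indepNumOn H s) + 1)) * indepNumOn G s := by
  classical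
  induction hh : indepNumOn H s using Nat.strong_induction_on generalizing s with
  | _ h IH =>
  obtain ⟨x, hL, hR⟩ := I.exists_halving_point s
  rw [hh] at hL hR
  set L := s.filter (I.right · < x)
  set M := s.filter (fun v => I.left v ≤ x ∧ x ≤ I.right v)
  set R := s.filter (x < I.left ·)
  set k := c * (2 * Nat.log 2 h)
  have hside : ∀ P ⊆ s, 2 * indepNumOn H P ≤ h → cliqueCoverNumOn G P ≤ k * indepNumOn G P := by
    intro P hPs hP
    rcases P.eq_empty_or_nonempty with rfl | hPne
    · simp [cliqueCoverNumOn_empty]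
    have hpos := indepNumOn_pos H hPne
    calc cliqueCoverNumOn G P
        ≤ c * (2 * (Nat.log 2 (indepNumOn H P) + 1)) * indepNumOn G P :=
          IH _ (by omega) P (fun W hW => hc W (hW.trans hPs)) rfl
      _ ≤ c * (2 * Nat.log 2 h) * indepNumOn G P := by
          rw [← Nat.log_mul_base one_lt_two hpos.ne']
          gcongr
          omega
  have hcover : s ⊆ L ∪ (M ∪ R) := by
    intro v hv
    simp only [L, M, R, Finset.mem_union, Finset.mem_filter, hv, true_and]
    by_contra! h
    exact (h.2.1 h.2.2).not_ge h.1
  have hLR : indepNumOn G L + indepNumOn G R ≤ indepNumOn G s :=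
    (indepNumOn_add_le G
      (Finset.disjoint_filter.2 fun v _ hvL hvR =>
        absurd (I.left_le_right v) (not_le.2 (hvL.trans hvR)))
      (fun u hu v hv huv => I.not_adj_of_right_lt_left
        ((Finset.mem_filter.1 hu).2.trans (Finset.mem_filter.1 hv).2) (hGH huv))).trans
    (indepNumOn_mono G (Finset.union_subset (Finset.filter_subset _ s) (Finset.filter_subset _ s)))
  have hM : cliqueCoverNumOn G M ≤ c * indepNumOn G s :=
    (hc M (Finset.filter_subset _ s) (I.isClique_filter_mem s x)).trans
      (Nat.mul_le_mul_left c (indepNumOn_mono G (Finset.filter_subset _ s)))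
  calc cliqueCoverNumOn G s
      ≤ cliqueCoverNumOn G L + (cliqueCoverNumOn G M + cliqueCoverNumOn G R) :=
        (cliqueCoverNumOn_le_add G hcover).trans
          (Nat.add_le_add_left (cliqueCoverNumOn_le_add G subset_rfl) _)
    _ ≤ k * indepNumOn G L + (c * indepNumOn G s + k * indepNumOn G R) :=
        add_le_add (hside L (Finset.filter_subset _ s) hL)
          (add_le_add hM (hside R (Finset.filter_subset _ s) hR))
    _ = k * (indepNumOn G L + indepNumOn G R) + c * indepNumOn G s := by ring
    _ ≤ k * indepNumOn G s + c * indepNumOn G s := by gcongr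
    _ ≤ c * (2 * (Nat.log 2 h + 1)) * indepNumOn G s := by
        simp only [k]
        nlinarith [Nat.zero_le (c * indepNumOn G s)]

theorem cliqueCoverNumOn_le_prod_log {ι : Type*} {G : SimpleGraph V} {H : ι → SimpleGraph V}
    (I : ∀ i, IntervalModel (H i)) (hGH : ∀ i, G ≤ H i) (c : ℕ) (J : Finset ι) (s : Finset V)
    (hc : ∀ W ⊆ s, (∀ i ∈ J, (H i).IsClique (W : Set V)) →
      cliqueCoverNumOn G W ≤ c * indepNumOn G W) :
    cliqueCoverNumOn G s ≤
      c * (∏ i ∈ J, 2 * (Nat.log 2 (indepNumOn (H i) s) + 1)) * indepNumOn G s := by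
  classical
  induction J using Finset.induction_on generalizing s with
  | empty => simpa using hc s subset_rfl (by simp)
  | insert j J hj IH =>
    refine ((I j).cliqueCoverNumOn_le_mul_log (hGH j)
      (c * ∏ i ∈ J, 2 * (Nat.log 2 (indepNumOn (H i) s) + 1)) s fun W hWs hWj => ?_).trans_eq
      (by rw [Finset.prod_insert hj]; ring)
    calc cliqueCoverNumOn G W
        ≤ c * (∏ i ∈ J, 2 * (Nat.log 2 (indepNumOn (H i) W) + 1)) * indepNumOn G W :=
          IH W fun W' hW' hJ => hc W' (hW'.trans hWs) <|
            (Finset.forall_mem_insert _ _ _).2 ⟨hWj.subset (by exact_mod_cast hW'), hJ⟩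
      _ ≤ c * (∏ i ∈ J, 2 * (Nat.log 2 (indepNumOn (H i) s) + 1)) * indepNumOn G W := by
          gcongr with i
          exact indepNumOn_mono _ hWs

end

theorem clique_cover_bound_many_interval_perfect_general {V : Type*} [Fintype V]
    (t : ℕ) (H : Fin (t - 1) → SimpleGraph V) (K G : SimpleGraph V)
    (hG : G = (⨅ i, H i) ⊓ K)
    (hH : ∀ i, IsIntervalGraph (H i)) (hK : IsPerfectGraph K) :
    (cliqueCoverNum G : ℝ) ≤
      2 ^ (t - 1) * (_root_.indepNum G : ℝ) *
        ∏ i : Fin (t - 1), (Real.logb 2 (_root_.indepNum (H i) : ℝ) + 1) := by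
  have hGH : ∀ i, G ≤ H i := fun i => hG ▸ inf_le_left.trans (iInf_le H i)
  have hmain := cliqueCoverNumOn_le_prod_log (fun i => (hH i).nonempty_intervalModel.some) hGH 1
    Finset.univ Finset.univ fun W _ hW => by
      rw [one_mul]
      exact hK.cliqueCoverNumOn_le_indepNumOn (hG ▸ induce_inf_eq_of_isClique
        (isClique_iInf fun i => hW i (Finset.mem_univ i)))
  have hlog : ∀ i, (Nat.log 2 (indepNumOn (H i) Finset.univ) : ℝ) ≤
      Real.logb 2 (_root_.indepNum (H i) : ℝ) := fun i =>
    (Nat.cast_le.2 (Nat.log_mono_right (indepNumOn_le_indepNum _ _))).trans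
      (by exact_mod_cast Real.natLog_le_logb _ 2)
  calc (cliqueCoverNum G : ℝ)
      ≤ (∏ i, 2 * ((Nat.log 2 (indepNumOn (H i) Finset.univ) : ℝ) + 1)) *
          indepNumOn G Finset.univ := by
        exact_mod_cast (cliqueCoverNum_le_cliqueCoverNumOn_univ G).trans (by simpa using hmain)
    _ ≤ (∏ i, 2 * (Real.logb 2 (_root_.indepNum (H i) : ℝ) + 1)) * _root_.indepNum G := by
        refine mul_le_mul (Finset.prod_le_prod (fun i _ => by positivity)
          fun i _ => by linarith [hlog i]) (by exact_mod_cast indepNumOn_le_indepNum G _)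
          (Nat.cast_nonneg _) (Finset.prod_nonneg fun i _ => ?_)
        linarith [(Nat.cast_nonneg (α := ℝ) _).trans (hlog i)]
    _ = _ := by
        rw [Finset.prod_mul_distrib, Finset.prod_const, Finset.card_univ, Fintype.card_fin]
        ring

theorem clique_cover_bound_many_interval_perfect {V : Type*} [Fintype V]
    (t : ℕ) (ht : 2 ≤ t) (H : Fin (t - 1) → SimpleGraph V) (K G : SimpleGraph V)
    (hG : G = (⨅ i, H i) ⊓ K)
    (hH : ∀ i, IsIntervalGraph (H i)) (hK : IsPerfectGraph K) :
    (cliqueCoverNum G : ℝ) ≤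
      2 ^ (t - 1) * (_root_.indepNum G : ℝ) *
        ∏ i : Fin (t - 1), (Real.logb 2 (_root_.indepNum (H i) : ℝ) + 1) :=
  clique_cover_bound_many_interval_perfect_general t H K G hG hH hK
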